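/- arXiv:2303.05307 — 3 statements merged into one kernel-verified Lean document; each statement's English description precedes it below -/
import Mathlib

section
/- Let G = (U₁,…,Uₙ) be a finite n-player normal-form game. Then Σ_{i=1}^{n} HS_i(G) = maxmax(G_N) = max_{a ∈ A} Σ_{j ∈ N} U_j(a); that is, the Harsanyi–Shapley values of the players sum to the maximal total utility achievable by the grand coalition. -/
open Finset

/-- The maxmin value of a two-player zero-sum game with payoff `W` to the maximizer:
`sup` over mixed strategies of the row player of the `inf` over mixed strategies of the
column player of the expected payoff. -/
noncomputable def maxmin {S T : Type*} [Fintype S] [Fintype T] (W : S → T → ℝ) : ℝ :=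
  ⨆ σ : stdSimplex ℝ S, ⨅ τ : stdSimplex ℝ T,
    ∑ s : S, ∑ t : T, σ.1 s * τ.1 t * W s t

/-- The maxmin value of the coalition `I` in the two-player zero-sum game `G_I`, in which
coalition `I` (action set `Π_{j∈I} A_j`) plays against its complement (action set
`Π_{j∉I} A_j`) with payoff `Σ_{j∈I} U_j − Σ_{j∉I} U_j` to `I`. -/
noncomputable def coalitionMaxmin {n : ℕ} (A : Fin n → Type*) [∀ j, Fintype (A j)]
    (U : Fin n → (∀ j, A j) → ℝ) (I : Finset (Fin n)) : ℝ :=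
  maxmin (fun (aI : ∀ j : {j // j ∈ I}, A j) (aC : ∀ j : {j // j ∉ I}, A j) =>
    let a : ∀ j, A j := fun j => if h : j ∈ I then aI ⟨j, h⟩ else aC ⟨j, h⟩
    ∑ j ∈ I, U j a - ∑ j ∈ Iᶜ, U j a)

/-- The maximal total utility achievable by the grand coalition. -/
noncomputable def maxmaxGrand {n : ℕ} (A : Fin n → Type*) [∀ j, Fintype (A j)]
    (U : Fin n → (∀ j, A j) → ℝ) : ℝ :=
  ⨆ a : ∀ j, A j, ∑ j : Fin n, U j a

/-- The Harsanyi–Shapley value of player `i`: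
`HS_i(G) = (1/n)(maxmax(G_N) + Σ_{I ⊊ N, i∈I} C(n−1,|I|−1)⁻¹ maxmin_I(G_I))`. -/
noncomputable def HSvalue {n : ℕ} (A : Fin n → Type*) [∀ j, Fintype (A j)]
    (U : Fin n → (∀ j, A j) → ℝ) (i : Fin n) : ℝ :=
  (1 / (n : ℝ)) * (maxmaxGrand A U +
    ∑ I ∈ Finset.univ.filter (fun I : Finset (Fin n) => I ⊂ Finset.univ ∧ i ∈ I),
      ((Nat.choose (n - 1) (I.card - 1) : ℝ))⁻¹ * coalitionMaxmin A U I)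

/-! ### Auxiliary lemmas -/

section Aux

lemma HS_LM_pi_apply {S : Type*} [Fintype S] [DecidableEq S] (f : (S → ℝ) →L[ℝ] ℝ) (x : S → ℝ) :
    f x = ∑ s : S, x s * f (fun j => if s = j then 1 else 0) := by
  have := LinearMap.pi_apply_eq_sum_univ (f : (S → ℝ) →ₗ[ℝ] ℝ) x
  simpa [smul_eq_mul] using this

lemma HS_delta_mem_stdSimplex {T : Type*} [Fintype T] [DecidableEq T] (t : T) :
    (fun t' => if t' = t then (1:ℝ) else 0) ∈ stdSimplex ℝ T :=
  ⟨fun x => by dsimp only; split <;> norm_num, by simp⟩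

/-- Ville's theorem of the alternative, via Hahn-Banach separation. -/
lemma HS_alternative {S T : Type*} [Fintype S] [Fintype T] [Nonempty S] [Nonempty T]
    (W : S → T → ℝ) :
    (∃ τ ∈ stdSimplex ℝ T, ∀ s, ∑ t, τ t * W s t ≤ 0) ∨
    (∃ σ ∈ stdSimplex ℝ S, ∀ t, 0 < ∑ s, σ s * W s t) := by
  classical
  by_cases hfirst : ∃ τ ∈ stdSimplex ℝ T, ∀ s, ∑ t, τ t * W s t ≤ 0
  · exact Or.inl hfirst
  right
  push_neg at hfirst
  set L : (T → ℝ) →ₗ[ℝ] (S → ℝ) :=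
    { toFun := fun τ s => ∑ t, τ t * W s t
      map_add' := by intro x y; funext s; simp [add_mul, Finset.sum_add_distrib]
      map_smul' := by intro c x; funext s; simp [Finset.mul_sum, mul_assoc] } with hL
  set D : Set (S → ℝ) := L '' stdSimplex ℝ T with hD
  set O : Set (S → ℝ) := {x | ∀ s, x s ≤ 0} with hO
  have hDc : Convex ℝ D := (convex_stdSimplex ℝ T).linear_image L
  have hDk : IsCompact D := (isCompact_stdSimplex ℝ T).image L.continuous_of_finiteDimensional
  have hOc : Convex ℝ O := by
    intro x hx y hy a b ha hb hab s
    have h1 := hx s; have h2 := hy s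
    have : a * x s + b * y s ≤ 0 := by nlinarith
    simpa using this
  have hOcl : IsClosed O := by
    have : O = ⋂ s, {x : S → ℝ | x s ≤ 0} := by ext x; simp [hO]
    rw [this]
    exact isClosed_iInter fun s => isClosed_le (continuous_apply s) continuous_const
  have hdisj : Disjoint D O := by
    rw [Set.disjoint_left]
    rintro x ⟨τ, hτ, rfl⟩ hxO
    obtain ⟨s, hs⟩ := hfirst τ hτ
    exact absurd (hxO s) (not_le.2 hs)
  obtain ⟨f, u, v, hfu, huv, hfv⟩ := geometric_hahn_banach_compact_closed hDc hDk hOc hOcl hdisj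
  have h0O : (0 : S → ℝ) ∈ O := fun s => le_refl 0
  have hv0 : v < 0 := by simpa using hfv 0 h0O
  have hu0 : u < 0 := huv.trans hv0
  set σ : S → ℝ := fun s => -f (fun j => if s = j then 1 else 0) with hσ
  have hσ0 : ∀ s, 0 ≤ σ s := by
    intro s
    by_contra hneg
    push_neg at hneg
    set es : S → ℝ := fun j => if s = j then 1 else 0 with hes
    have hr : ∀ r : ℝ, 0 ≤ r → v < r * σ s := by
      intro r hr
      have hmem : (-r) • es ∈ O := by
        intro j
        simp only [Pi.smul_apply, smul_eq_mul, hes]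
        by_cases h : s = j
        · simp [h]; linarith
        · simp [h]
      have := hfv _ hmem
      simpa [hσ, mul_comm, mul_neg, neg_mul] using this
    have hrpos : 0 ≤ (v - 1) / σ s :=
      le_of_lt (div_pos_of_neg_of_neg (by linarith) hneg)
    have := hr _ hrpos
    rw [div_mul_cancel₀ _ (ne_of_lt hneg)] at this
    linarith
  have hkey : ∀ t, -u ≤ ∑ s, σ s * W s t := by
    intro t
    have hmem : (L (fun t' => if t' = t then (1:ℝ) else 0)) ∈ D :=
      Set.mem_image_of_mem _ (HS_delta_mem_stdSimplex t)
    have hlt := hfu _ hmem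
    have hLval : L (fun t' => if t' = t then (1:ℝ) else 0) = fun s => W s t := by
      funext s; simp [hL, ite_mul]
    rw [hLval] at hlt
    rw [HS_LM_pi_apply f] at hlt
    have : ∑ s, W s t * f (fun j => if s = j then 1 else 0) = -∑ s, σ s * W s t := by
      rw [← Finset.sum_neg_distrib]
      exact Finset.sum_congr rfl fun s _ => by simp [hσ]; ring
    rw [this] at hlt
    linarith
  set M : ℝ := ∑ s, σ s with hM
  have hM0 : 0 < M := by
    rcases lt_or_eq_of_le (Finset.sum_nonneg (fun s _ => hσ0 s) : (0:ℝ) ≤ M) with h | h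
    · exact h
    · exfalso
      have hz : ∀ s ∈ Finset.univ, σ s = 0 :=
        (Finset.sum_eq_zero_iff_of_nonneg (fun s _ => hσ0 s)).1 h.symm
      obtain ⟨t⟩ := ‹Nonempty T›
      have := hkey t
      have hzz : ∑ s, σ s * W s t = 0 :=
        Finset.sum_eq_zero fun s hs => by rw [hz s hs, zero_mul]
      rw [hzz] at this
      linarith
  refine ⟨fun s => σ s / M, ⟨fun s => div_nonneg (hσ0 s) hM0.le, by
    rw [← Finset.sum_div, ← hM, div_self hM0.ne']⟩, fun t => ?_⟩
  have : ∑ s, σ s / M * W s t = (∑ s, σ s * W s t) / M := by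
    rw [Finset.sum_div]; exact Finset.sum_congr rfl fun s _ => by ring
  rw [this]
  have h := hkey t
  exact div_pos (lt_of_lt_of_le (by linarith) h) hM0

section Minimax
variable {S T : Type*} [Fintype S] [Fintype T]

instance HS_stdSimplex_nonempty {T : Type*} [Fintype T] [Nonempty T] :
    Nonempty (stdSimplex ℝ T) := by
  classical
  obtain ⟨t⟩ := ‹Nonempty T›
  exact ⟨⟨_, HS_delta_mem_stdSimplex t⟩⟩

lemma HS_simplex_coord_le_one {σ : T → ℝ} (hσ : σ ∈ stdSimplex ℝ T) (t : T) : σ t ≤ 1 := by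
  rw [← hσ.2]
  exact Finset.single_le_sum (fun j _ => hσ.1 j) (Finset.mem_univ t)

lemma HS_E_abs_le (W : S → T → ℝ) {σ : S → ℝ} {τ : T → ℝ}
    (hσ : σ ∈ stdSimplex ℝ S) (hτ : τ ∈ stdSimplex ℝ T) :
    |∑ s : S, ∑ t : T, σ s * τ t * W s t| ≤ ∑ s : S, ∑ t : T, |W s t| := by
  calc |∑ s : S, ∑ t : T, σ s * τ t * W s t|
      ≤ ∑ s : S, |∑ t : T, σ s * τ t * W s t| := Finset.abs_sum_le_sum_abs _ _
    _ ≤ ∑ s : S, ∑ t : T, |σ s * τ t * W s t| :=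
        Finset.sum_le_sum fun s _ => Finset.abs_sum_le_sum_abs _ _
    _ ≤ ∑ s : S, ∑ t : T, |W s t| := by
        refine Finset.sum_le_sum fun s _ => Finset.sum_le_sum fun t _ => ?_
        rw [abs_mul, abs_mul]
        have h1 : |σ s| ≤ 1 := by
          rw [abs_of_nonneg (hσ.1 s)]; exact HS_simplex_coord_le_one hσ s
        have h2 : |τ t| ≤ 1 := by
          rw [abs_of_nonneg (hτ.1 t)]; exact HS_simplex_coord_le_one hτ t
        have h0 : (0:ℝ) ≤ |W s t| := abs_nonneg _
        have hx : |σ s| * |τ t| ≤ 1 :=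
          mul_le_one₀ h1 (abs_nonneg _) h2
        exact mul_le_of_le_one_left h0 hx

variable [Nonempty S] [Nonempty T]

omit [Nonempty S] in
lemma HS_E_bddBelow (W : S → T → ℝ) (σ : stdSimplex ℝ S) :
    BddBelow (Set.range fun τ : stdSimplex ℝ T =>
      ∑ s : S, ∑ t : T, σ.1 s * τ.1 t * W s t) := by
  refine ⟨-∑ s : S, ∑ t : T, |W s t|, ?_⟩
  rintro x ⟨τ, rfl⟩
  have := HS_E_abs_le W σ.2 τ.2
  rw [abs_le] at this
  exact this.1

omit [Nonempty S] in
lemma HS_g_bddAbove (W : S → T → ℝ) :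
    BddAbove (Set.range fun σ : stdSimplex ℝ S => ⨅ τ : stdSimplex ℝ T,
      ∑ s : S, ∑ t : T, σ.1 s * τ.1 t * W s t) := by
  refine ⟨∑ s : S, ∑ t : T, |W s t|, ?_⟩
  rintro x ⟨σ, rfl⟩
  obtain ⟨τ⟩ : Nonempty (stdSimplex ℝ T) := inferInstance
  refine le_trans (ciInf_le (HS_E_bddBelow W σ) τ) ?_
  have := HS_E_abs_le W σ.2 τ.2
  rw [abs_le] at this
  exact this.2

lemma HS_le_maxmin_of {W : S → T → ℝ} {c : ℝ} {σ : S → ℝ} (hσ : σ ∈ stdSimplex ℝ S)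
    (h : ∀ τ ∈ stdSimplex ℝ T, c ≤ ∑ s : S, ∑ t : T, σ s * τ t * W s t) :
    c ≤ maxmin W := by
  have h1 := le_ciSup (HS_g_bddAbove W) (⟨σ, hσ⟩ : stdSimplex ℝ S)
  have h2 : c ≤ ⨅ τ : stdSimplex ℝ T, ∑ s : S, ∑ t : T, σ s * τ.1 t * W s t :=
    le_ciInf fun τ => h τ.1 τ.2
  exact le_trans h2 h1

omit [Nonempty T] in
lemma HS_inner_comm (W : S → T → ℝ) (σ : S → ℝ) (τ : T → ℝ) :
    ∑ s : S, ∑ t : T, σ s * τ t * W s t = ∑ t : T, τ t * ∑ s : S, σ s * W s t := by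
  rw [Finset.sum_comm]
  exact Finset.sum_congr rfl fun t _ => by
    rw [Finset.mul_sum]; exact Finset.sum_congr rfl fun s _ => by ring

omit [Nonempty S] [Nonempty T] in
lemma HS_inner_comm2 (W : S → T → ℝ) (σ : S → ℝ) (τ : T → ℝ) :
    ∑ s : S, ∑ t : T, σ s * τ t * W s t = ∑ s : S, σ s * ∑ t : T, τ t * W s t :=
  Finset.sum_congr rfl fun s _ => by
    rw [Finset.mul_sum]; exact Finset.sum_congr rfl fun t _ => by ring

omit [Nonempty S] [Nonempty T] in
lemma HS_inner_comm' (W : S → T → ℝ) (σ : S → ℝ) (τ : T → ℝ) :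
    ∑ t : T, ∑ s : S, τ t * σ s * (-W s t) = -∑ s : S, ∑ t : T, σ s * τ t * W s t := by
  rw [Finset.sum_comm, ← Finset.sum_neg_distrib]
  exact Finset.sum_congr rfl fun s _ => by
    rw [← Finset.sum_neg_distrib]; exact Finset.sum_congr rfl fun t _ => by ring

/-- The von Neumann minimax theorem, in the form:
the value of the game to one player is the negative of the value to the other. -/
theorem HS_maxmin_add_maxmin_neg (W : S → T → ℝ) :
    maxmin W + maxmin (fun t s => -W s t) = 0 := by
  set W' : T → S → ℝ := fun t s => -W s t with hW'
  have hE' : ∀ (σ : S → ℝ) (τ : T → ℝ),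
      ∑ t : T, ∑ s : S, τ t * σ s * W' t s = -∑ s : S, ∑ t : T, σ s * τ t * W s t :=
    fun σ τ => HS_inner_comm' W σ τ
  have hle : maxmin W + maxmin W' ≤ 0 := by
    have h2 : maxmin W' ≤ -maxmin W := by
      refine ciSup_le fun τ => ?_
      rw [le_neg]
      refine ciSup_le fun σ => ?_
      rw [le_neg]
      refine le_trans (ciInf_le (HS_E_bddBelow W' τ) σ) ?_
      rw [hE' σ.1 τ.1, neg_le_neg_iff]
      exact ciInf_le (HS_E_bddBelow W σ) τ
    linarith
  have hge : 0 ≤ maxmin W + maxmin W' := by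
    by_contra hc
    push_neg at hc
    set c : ℝ := (maxmin W - maxmin W') / 2 with hc'
    have hmc : maxmin W < c := by rw [hc']; linarith
    have hcm : maxmin W' < -c := by rw [hc']; linarith
    rcases HS_alternative (fun s t => W s t - c) with ⟨τ, hτ, hτle⟩ | ⟨σ, hσ, hσgt⟩
    · have hWb : ∀ s, ∑ t, τ t * W s t ≤ c := by
        intro s
        have := hτle s
        have hexp : ∑ t, τ t * (W s t - c) = (∑ t, τ t * W s t) - c := by
          have e1 : ∑ t, τ t * (W s t - c) = ∑ t, (τ t * W s t - τ t * c) :=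
            Finset.sum_congr rfl fun t _ => by ring
          rw [e1, Finset.sum_sub_distrib, ← Finset.sum_mul, hτ.2, one_mul]
        rw [hexp] at this
        linarith
      have : -c ≤ maxmin W' := by
        refine HS_le_maxmin_of hτ fun σ hσ => ?_
        have heq := hE' σ τ
        rw [heq, neg_le_neg_iff, HS_inner_comm2 W σ τ]
        calc ∑ s, σ s * ∑ t, τ t * W s t ≤ ∑ s, σ s * c :=
              Finset.sum_le_sum fun s _ => mul_le_mul_of_nonneg_left (hWb s) (hσ.1 s)
          _ = c := by rw [← Finset.sum_mul, hσ.2, one_mul]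
      linarith
    · have hWb : ∀ t, c < ∑ s, σ s * W s t := by
        intro t
        have := hσgt t
        have hexp : ∑ s, σ s * (W s t - c) = (∑ s, σ s * W s t) - c := by
          have e1 : ∑ s, σ s * (W s t - c) = ∑ s, (σ s * W s t - σ s * c) :=
            Finset.sum_congr rfl fun s _ => by ring
          rw [e1, Finset.sum_sub_distrib, ← Finset.sum_mul, hσ.2, one_mul]
        rw [hexp] at this
        linarith
      have : c ≤ maxmin W := by
        refine HS_le_maxmin_of hσ fun τ hτ => ?_
        rw [HS_inner_comm W σ τ]
        calc c = ∑ t, τ t * c := by rw [← Finset.sum_mul, hτ.2, one_mul]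
          _ ≤ ∑ t, τ t * ∑ s, σ s * W s t :=
              Finset.sum_le_sum fun t _ => mul_le_mul_of_nonneg_left (hWb t).le (hτ.1 t)
      linarith
  linarith
end Minimax

/-- transport of the simplex along an equiv -/
def HS_simplexEquiv {S S' : Type*} [Fintype S] [Fintype S'] (e : S ≃ S') :
    stdSimplex ℝ S ≃ stdSimplex ℝ S' where
  toFun σ := ⟨σ.1 ∘ e.symm, fun s' => σ.2.1 _, by
    simpa using Equiv.sum_comp e.symm σ.1 ▸ σ.2.2⟩
  invFun σ := ⟨σ.1 ∘ e, fun s => σ.2.1 _, by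
    simpa using Equiv.sum_comp e σ.1 ▸ σ.2.2⟩
  left_inv σ := by ext s; show σ.1 (e.symm (e s)) = σ.1 s; simp
  right_inv σ := by ext s; show σ.1 (e (e.symm s)) = σ.1 s; simp

lemma HS_maxmin_congr {S T S' T' : Type*} [Fintype S] [Fintype T] [Fintype S'] [Fintype T']
    (e : S ≃ S') (f : T ≃ T') {W : S → T → ℝ} {W' : S' → T' → ℝ}
    (h : ∀ s t, W' (e s) (f t) = W s t) : maxmin W = maxmin W' := by
  unfold maxmin
  rw [← (HS_simplexEquiv e).surjective.iSup_comp]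
  refine iSup_congr fun σ => ?_
  rw [← (HS_simplexEquiv f).surjective.iInf_comp]
  refine iInf_congr fun τ => ?_
  rw [← Equiv.sum_comp e (fun s => _)]
  refine Finset.sum_congr rfl fun s _ => ?_
  rw [← Equiv.sum_comp f (fun t => _)]
  refine Finset.sum_congr rfl fun t _ => ?_
  simp [HS_simplexEquiv, h s t]

/-- The values of complementary coalitions cancel. -/
lemma HS_coalition_pair {n : ℕ} (A : Fin n → Type*) [∀ j, Fintype (A j)]
    [∀ j, Nonempty (A j)] (U : Fin n → (∀ j, A j) → ℝ) (I : Finset (Fin n))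
    (h1 : I.Nonempty) (h2 : I ⊂ Finset.univ) :
    coalitionMaxmin A U I + coalitionMaxmin A U Iᶜ = 0 := by
  classical
  haveI : Nonempty {j // j ∈ I} := by
    obtain ⟨j, hj⟩ := h1; exact ⟨⟨j, hj⟩⟩
  haveI : Nonempty {j // j ∉ I} := by
    obtain ⟨j, hj⟩ := Finset.exists_of_ssubset h2
    exact ⟨⟨j, hj.2⟩⟩
  set W : (∀ j : {j // j ∈ I}, A j) → (∀ j : {j // j ∉ I}, A j) → ℝ :=
    fun aI aC =>
      let a : ∀ j, A j := fun j => if h : j ∈ I then aI ⟨j, h⟩ else aC ⟨j, h⟩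
      ∑ j ∈ I, U j a - ∑ j ∈ Iᶜ, U j a with hW
  have key := HS_maxmin_add_maxmin_neg W
  have hIc : coalitionMaxmin A U Iᶜ = maxmin (fun aC aI => -W aI aC) := by
    unfold coalitionMaxmin
    refine HS_maxmin_congr
      (⟨fun g j => g ⟨j.1, Finset.mem_compl.mpr j.2⟩,
        fun g j => g ⟨j.1, Finset.mem_compl.mp j.2⟩, fun g => rfl, fun g => rfl⟩ :
        (∀ j : {j // j ∈ Iᶜ}, A j) ≃ (∀ j : {j // j ∉ I}, A j))
      (⟨fun g j => g ⟨j.1, fun hc => (Finset.mem_compl.mp hc) j.2⟩,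
        fun g j => g ⟨j.1, by simpa using j.2⟩, fun g => rfl, fun g => rfl⟩ :
        (∀ j : {j // j ∉ Iᶜ}, A j) ≃ (∀ j : {j // j ∈ I}, A j))
      fun s t => ?_
    show -W _ _ = _
    rw [hW]
    dsimp only [Equiv.coe_fn_mk]
    rw [compl_compl I, neg_sub]
    have ha : ∀ j : Fin n,
        (if h : j ∈ I then t ⟨j, fun hc => (Finset.mem_compl.mp hc) (h : j ∈ I)⟩
          else s ⟨j, Finset.mem_compl.mpr h⟩)
        = (if h : j ∈ Iᶜ then s ⟨j, h⟩ else t ⟨j, h⟩) := by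
      intro j
      by_cases hj : j ∈ I
      · rw [dif_pos hj, dif_neg (by simpa using hj)]
      · rw [dif_neg hj, dif_pos (Finset.mem_compl.mpr hj)]
    congr 1 <;>
      exact Finset.sum_congr rfl fun j _ => congrArg (U j) (funext fun j' => ha j')
  rw [hIc]
  convert key using 2
  rfl

/-- The real-coefficient identity `k / C(n-1,k-1) = (n-k) / C(n-1,n-k-1)`. -/
lemma HS_coef_eq {n k : ℕ} (h1 : 1 ≤ k) (h2 : k < n) :
    (k : ℝ) * ((Nat.choose (n-1) (k-1) : ℝ))⁻¹
      = ((n-k : ℕ) : ℝ) * ((Nat.choose (n-1) ((n-k : ℕ)-1) : ℝ))⁻¹ := by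
  have e1 : (n - k) - 1 = (n-1) - k := by omega
  rw [e1]
  have hsymm : Nat.choose (n-1) ((n-1) - k) = Nat.choose (n-1) k :=
    Nat.choose_symm (by omega)
  rw [hsymm]
  have hc1 : 0 < Nat.choose (n-1) (k-1) := Nat.choose_pos (by omega)
  have hc2 : 0 < Nat.choose (n-1) k := Nat.choose_pos (by omega)
  have hnat : Nat.choose (n-1) k * k = Nat.choose (n-1) (k-1) * (n - k) := by
    have := Nat.choose_succ_right_eq (n-1) (k-1)
    have ek : k - 1 + 1 = k := by omega
    rw [ek] at this
    have e2 : (n-1) - (k-1) = n - k := by omega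
    rw [e2] at this
    exact this
  have hc1R : ((Nat.choose (n-1) (k-1) : ℝ)) ≠ 0 := by positivity
  have hc2R : ((Nat.choose (n-1) k : ℝ)) ≠ 0 := by positivity
  have hR : (Nat.choose (n-1) k : ℝ) * k = (Nat.choose (n-1) (k-1) : ℝ) * ((n-k:ℕ):ℝ) := by
    exact_mod_cast hnat
  field_simp
  linear_combination hR

end Aux

/-- The Harsanyi–Shapley values of the players sum to the maximal total utility
achievable by the grand coalition. -/
theorem hs_values_sum_to_maxmax {n : ℕ} (hn : 1 ≤ n)
    (A : Fin n → Type*) [∀ j, Fintype (A j)] [∀ j, Nonempty (A j)]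
    (U : Fin n → (∀ j, A j) → ℝ) :
    ∑ i : Fin n, HSvalue A U i = maxmaxGrand A U := by
  classical
  have hn0 : (n : ℝ) ≠ 0 := Nat.cast_ne_zero.mpr (by omega)
  have hswap : ∑ i : Fin n,
      ∑ I ∈ Finset.univ.filter (fun I : Finset (Fin n) => I ⊂ Finset.univ ∧ i ∈ I), (((Nat.choose (n - 1) (I.card - 1) : ℝ))⁻¹ * coalitionMaxmin A U I)
      = ∑ I ∈ Finset.univ.filter (fun I : Finset (Fin n) => I ⊂ Finset.univ), (I.card : ℝ) * (((Nat.choose (n - 1) (I.card - 1) : ℝ))⁻¹ * coalitionMaxmin A U I) := by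
    have step1 : ∀ i : Fin n,
        ∑ I ∈ Finset.univ.filter (fun I : Finset (Fin n) => I ⊂ Finset.univ ∧ i ∈ I), (((Nat.choose (n - 1) (I.card - 1) : ℝ))⁻¹ * coalitionMaxmin A U I)
        = ∑ I ∈ Finset.univ.filter (fun I : Finset (Fin n) => I ⊂ Finset.univ), (if i ∈ I then (((Nat.choose (n - 1) (I.card - 1) : ℝ))⁻¹ * coalitionMaxmin A U I) else 0) := by
      intro i
      rw [Finset.sum_filter, Finset.sum_filter]
      refine Finset.sum_congr rfl fun I _ => ?_
      by_cases h1 : I ⊂ Finset.univ <;> by_cases h2 : i ∈ I <;> simp [h1, h2]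
    rw [Finset.sum_congr rfl fun i _ => step1 i, Finset.sum_comm]
    refine Finset.sum_congr rfl fun I _ => ?_
    rw [Finset.sum_ite_mem, Finset.univ_inter, Finset.sum_const, nsmul_eq_mul]
  have hrestrict : ∑ I ∈ Finset.univ.filter (fun I : Finset (Fin n) => I ⊂ Finset.univ), (I.card : ℝ) * (((Nat.choose (n - 1) (I.card - 1) : ℝ))⁻¹ * coalitionMaxmin A U I)
      = ∑ I ∈ Finset.univ.filter
          (fun I : Finset (Fin n) => I ⊂ Finset.univ ∧ I.Nonempty), (I.card : ℝ) * (((Nat.choose (n - 1) (I.card - 1) : ℝ))⁻¹ * coalitionMaxmin A U I) := by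
    symm
    refine Finset.sum_subset ?_ ?_
    · intro I hI
      simp only [Finset.mem_filter] at hI ⊢
      exact ⟨hI.1, hI.2.1⟩
    · intro I hI hnI
      simp only [Finset.mem_filter] at hI hnI
      have : I = ∅ := by
        by_contra hne
        exact hnI ⟨hI.1, hI.2, Finset.nonempty_iff_ne_empty.mpr hne⟩
      simp [this]
  have hzero : ∑ I ∈ Finset.univ.filter
      (fun I : Finset (Fin n) => I ⊂ Finset.univ ∧ I.Nonempty), (I.card : ℝ) * (((Nat.choose (n - 1) (I.card - 1) : ℝ))⁻¹ * coalitionMaxmin A U I) = 0 := by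
    refine Finset.sum_involution (fun I _ => Iᶜ) ?_ ?_ ?_ ?_
    · intro I hI
      simp only [Finset.mem_filter] at hI
      obtain ⟨-, hIp, hIne⟩ := hI
      have hk1 : 1 ≤ I.card := Finset.card_pos.mpr hIne
      have hk2 : I.card < n := by
        have := Finset.card_lt_card hIp
        simpa using this
      have hcard : Iᶜ.card = n - I.card := by
        rw [Finset.card_compl]
        simp
      have hpair := HS_coalition_pair A U I hIne hIp
      have hm : coalitionMaxmin A U Iᶜ = -coalitionMaxmin A U I := by linarith
      have hco := HS_coef_eq hk1 hk2
      rw [hcard, hm]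
      linear_combination coalitionMaxmin A U I * hco
    · intro I hI hne hc
      have hc' : Iᶜ = I := hc
      rw [Finset.mem_filter] at hI
      obtain ⟨j, hj⟩ := hI.2.2
      have hj2 : j ∈ Iᶜ := by rw [hc']; exact hj
      exact (Finset.mem_compl.mp hj2) hj
    · intro I hI
      rw [Finset.mem_filter] at hI ⊢
      obtain ⟨-, hIp, hIne⟩ := hI
      refine ⟨Finset.mem_univ _, ?_, ?_⟩
      · rw [Finset.ssubset_univ_iff]
        intro hc
        obtain ⟨j, hj⟩ := hIne
        have : j ∈ Iᶜ := hc ▸ Finset.mem_univ j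
        exact (Finset.mem_compl.mp this) hj
      · obtain ⟨j, hj⟩ := Finset.exists_of_ssubset hIp
        exact ⟨j, Finset.mem_compl.mpr hj.2⟩
    · intro I hI
      exact compl_compl I

  -- put everything together
  unfold HSvalue
  rw [← Finset.mul_sum, Finset.sum_add_distrib, Finset.sum_const, Finset.card_univ,
    Fintype.card_fin]
  have htot : ∑ i : Fin n,
      ∑ I ∈ Finset.univ.filter (fun I : Finset (Fin n) => I ⊂ Finset.univ ∧ i ∈ I),
        ((Nat.choose (n - 1) (I.card - 1) : ℝ))⁻¹ * coalitionMaxmin A U I = 0 := by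
    rw [hswap, hrestrict]; exact hzero
  rw [htot, add_zero, nsmul_eq_mul]
  field_simp
end

section
/- Consider a finite two-player stochastic game. For every V = (V₁, V₂) : X → ℝ² and every state x ∈ X, the difference of the components of the HS Bellman update equals the zero-sum Bellman update of the component difference: [T V]₁(x) − [T V]₂(x) = [T₁ (V₁ − V₂)](x), where T₁ is the zero-sum Bellman operator with coalition reward R₁ − R₂ and maximizing player 1. -/
open Finset

/-- The two-player Harsanyi–Shapley (Coco) value of player 1:
`HS₁(G) = ½(max_a(U₁(a)+U₂(a)) + maxmin₁(U₁−U₂))`, where player 1 maximizes. -/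
noncomputable def hs1 {A₁ A₂ : Type*} [Fintype A₁] [Fintype A₂]
    (U₁ U₂ : A₁ → A₂ → ℝ) : ℝ :=
  (1 / 2) * ((⨆ a : A₁ × A₂, (U₁ a.1 a.2 + U₂ a.1 a.2)) +
    maxmin (fun a₁ a₂ => U₁ a₁ a₂ - U₂ a₁ a₂))

/-- The two-player Harsanyi–Shapley (Coco) value of player 2:
`HS₂(G) = ½(max_a(U₁(a)+U₂(a)) + maxmin₂(U₂−U₁))`, where player 2 maximizes. -/
noncomputable def hs2 {A₁ A₂ : Type*} [Fintype A₁] [Fintype A₂]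
    (U₁ U₂ : A₁ → A₂ → ℝ) : ℝ :=
  (1 / 2) * ((⨆ a : A₁ × A₂, (U₁ a.1 a.2 + U₂ a.1 a.2)) +
    maxmin (fun a₂ a₁ => U₂ a₁ a₂ - U₁ a₁ a₂))

/-- The zero-sum Bellman operator with coalition reward `U` and maximizing player 1:
`[T₁ V](x)` is the maxmin (over `Δ(A₁) × Δ(A₂)`) of
`(a₁,a₂) ↦ Σ_y P(x,(a₁,a₂),y)(U(x,(a₁,a₂),y) + γ V(y))`. -/
noncomputable def bellmanZS1 {X A₁ A₂ : Type*} [Fintype X] [Fintype A₁] [Fintype A₂]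
    (P : X → A₁ × A₂ → X → ℝ) (γ : ℝ) (U : X → A₁ × A₂ → X → ℝ)
    (V : X → ℝ) : X → ℝ := fun x =>
  maxmin (fun a₁ a₂ => ∑ y : X, P x (a₁, a₂) y * (U x (a₁, a₂) y + γ * V y))

/-- The zero-sum Bellman operator with coalition reward `U` and maximizing player 2:
`[T₂ V](x)` is the maxmin over `Δ(A₂) × Δ(A₁)` (player 2 maximizing) of
`(a₂,a₁) ↦ Σ_y P(x,(a₁,a₂),y)(U(x,(a₁,a₂),y) + γ V(y))`. -/
noncomputable def bellmanZS2 {X A₁ A₂ : Type*} [Fintype X] [Fintype A₁] [Fintype A₂]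
    (P : X → A₁ × A₂ → X → ℝ) (γ : ℝ) (U : X → A₁ × A₂ → X → ℝ)
    (V : X → ℝ) : X → ℝ := fun x =>
  maxmin (fun a₂ a₁ => ∑ y : X, P x (a₁, a₂) y * (U x (a₁, a₂) y + γ * V y))

/-- The cooperative Bellman operator:
`[T₁₂ V](x) = max_{a∈A} Σ_y P(x,a,y)(R₁(x,a,y) + R₂(x,a,y) + γ V(y))`. -/
noncomputable def bellmanCoop {X A₁ A₂ : Type*} [Fintype X] [Fintype A₁] [Fintype A₂]
    (P : X → A₁ × A₂ → X → ℝ) (γ : ℝ) (R₁ R₂ : X → A₁ × A₂ → X → ℝ)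
    (V : X → ℝ) : X → ℝ := fun x =>
  ⨆ a : A₁ × A₂, ∑ y : X, P x a y * (R₁ x a y + R₂ x a y + γ * V y)

/-- The HS Bellman operator: `[T V](x) = HS(G_x(V))`, where `G_x(V)` is the two-player
normal-form game with utilities `U_i(x,a,V) = Σ_y P(x,a,y)(R_i(x,a,y) + γ V_i(y))`. -/
noncomputable def bellmanHS {X A₁ A₂ : Type*} [Fintype X] [Fintype A₁] [Fintype A₂]
    (P : X → A₁ × A₂ → X → ℝ) (γ : ℝ) (R₁ R₂ : X → A₁ × A₂ → X → ℝ)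
    (V : X → ℝ × ℝ) : X → ℝ × ℝ := fun x =>
  (hs1 (fun a₁ a₂ => ∑ y : X, P x (a₁, a₂) y * (R₁ x (a₁, a₂) y + γ * (V y).1))
       (fun a₁ a₂ => ∑ y : X, P x (a₁, a₂) y * (R₂ x (a₁, a₂) y + γ * (V y).2)),
   hs2 (fun a₁ a₂ => ∑ y : X, P x (a₁, a₂) y * (R₁ x (a₁, a₂) y + γ * (V y).1))
       (fun a₁ a₂ => ∑ y : X, P x (a₁, a₂) y * (R₂ x (a₁, a₂) y + γ * (V y).2)))

section MinimaxHelpers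

open Set

variable {S T : Type*} [Fintype S] [Fintype T]

instance stdSimplex.nonempty' [Nonempty S] : Nonempty (stdSimplex ℝ S) := by
  classical
  exact ⟨⟨Pi.single (Classical.arbitrary S) 1, single_mem_stdSimplex ℝ _⟩⟩

/-- Bound for bilinear payoffs. -/
noncomputable def payBound (W : S → T → ℝ) : ℝ := ∑ s : S, ∑ t : T, |W s t|

lemma abs_pay_le (W : S → T → ℝ) {σ : S → ℝ} {τ : T → ℝ}
    (hσ : σ ∈ stdSimplex ℝ S) (hτ : τ ∈ stdSimplex ℝ T) :
    |∑ s : S, ∑ t : T, σ s * τ t * W s t| ≤ payBound W := by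
  have hσ1 : ∀ s, σ s ≤ 1 := by
    intro s
    calc σ s ≤ ∑ s' : S, σ s' :=
          Finset.single_le_sum (fun i _ => hσ.1 i) (Finset.mem_univ s)
      _ = 1 := hσ.2
  have hτ1 : ∀ t, τ t ≤ 1 := by
    intro t
    calc τ t ≤ ∑ t' : T, τ t' :=
          Finset.single_le_sum (fun i _ => hτ.1 i) (Finset.mem_univ t)
      _ = 1 := hτ.2
  calc |∑ s : S, ∑ t : T, σ s * τ t * W s t|
      ≤ ∑ s : S, |∑ t : T, σ s * τ t * W s t| := Finset.abs_sum_le_sum_abs _ _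
    _ ≤ ∑ s : S, ∑ t : T, |σ s * τ t * W s t| :=
        Finset.sum_le_sum fun s _ => Finset.abs_sum_le_sum_abs _ _
    _ ≤ payBound W := by
        refine Finset.sum_le_sum fun s _ => Finset.sum_le_sum fun t _ => ?_
        rw [abs_mul, abs_mul, abs_of_nonneg (hσ.1 s), abs_of_nonneg (hτ.1 t)]
        exact mul_le_of_le_one_left (abs_nonneg _)
          (mul_le_one₀ (hσ1 s) (hτ.1 t) (hτ1 t))

lemma bddBelow_pay (W : S → T → ℝ) (σ : stdSimplex ℝ S) :
    BddBelow (range fun τ : stdSimplex ℝ T => ∑ s : S, ∑ t : T, σ.1 s * τ.1 t * W s t) := by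
  refine ⟨-payBound W, ?_⟩
  rintro _ ⟨τ, rfl⟩
  have := abs_pay_le W σ.2 τ.2
  have := neg_abs_le (∑ s : S, ∑ t : T, σ.1 s * τ.1 t * W s t)
  linarith

lemma bddAbove_pay (W : S → T → ℝ) (τ : stdSimplex ℝ T) :
    BddAbove (range fun σ : stdSimplex ℝ S => ∑ s : S, ∑ t : T, σ.1 s * τ.1 t * W s t) := by
  refine ⟨payBound W, ?_⟩
  rintro _ ⟨σ, rfl⟩
  have := abs_pay_le W σ.2 τ.2
  have := le_abs_self (∑ s : S, ∑ t : T, σ.1 s * τ.1 t * W s t)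
  linarith

lemma bddAbove_maxmin [Nonempty T] (W : S → T → ℝ) :
    BddAbove (range fun σ : stdSimplex ℝ S =>
      ⨅ τ : stdSimplex ℝ T, ∑ s : S, ∑ t : T, σ.1 s * τ.1 t * W s t) := by
  refine ⟨payBound W, ?_⟩
  rintro _ ⟨σ, rfl⟩
  obtain ⟨τ⟩ : Nonempty (stdSimplex ℝ T) := inferInstance
  refine ciInf_le_of_le (bddBelow_pay W σ) τ ?_
  have := abs_pay_le W σ.2 τ.2
  have := le_abs_self (∑ s : S, ∑ t : T, σ.1 s * τ.1 t * W s t)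
  linarith

lemma le_maxmin [Nonempty T] (W : S → T → ℝ) (c : ℝ) (σ : stdSimplex ℝ S)
    (h : ∀ τ : stdSimplex ℝ T, c ≤ ∑ s : S, ∑ t : T, σ.1 s * τ.1 t * W s t) :
    c ≤ maxmin W :=
  le_ciSup_of_le (bddAbove_maxmin W) σ (le_ciInf h)

lemma maxmin_le [Nonempty S] (W : S → T → ℝ) (c : ℝ) (τ : stdSimplex ℝ T)
    (h : ∀ σ : stdSimplex ℝ S, ∑ s : S, ∑ t : T, σ.1 s * τ.1 t * W s t ≤ c) :
    maxmin W ≤ c :=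
  ciSup_le fun σ => ciInf_le_of_le (bddBelow_pay W σ) τ (h σ)

/-- Theorem of the alternative for matrix games, via separating hyperplanes. -/
lemma matrix_alternative [Nonempty S] (W : S → T → ℝ) :
    (∃ τ ∈ stdSimplex ℝ T, ∀ s, ∑ t : T, τ t * W s t ≤ 0) ∨
    (∃ σ ∈ stdSimplex ℝ S, ∀ t, 0 < ∑ s : S, σ s * W s t) := by
  classical
  set g : S ⊕ T → S → ℝ := Sum.elim (fun s => Pi.single s 1) (fun t s => W s t) with hg
  set L : ((S ⊕ T) → ℝ) →ₗ[ℝ] (S → ℝ) :=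
    LinearMap.pi (fun s => ∑ i : S ⊕ T, g i s • LinearMap.proj i) with hL
  have hLapp : ∀ (w : (S ⊕ T) → ℝ) (s : S), L w s = ∑ i : S ⊕ T, w i * g i s := by
    intro w s
    simp [hL, LinearMap.pi_apply, LinearMap.sum_apply, mul_comm]
  set C : Set (S → ℝ) := L '' stdSimplex ℝ (S ⊕ T) with hC
  have hCconv : Convex ℝ C := (convex_stdSimplex ℝ _).linear_image L
  have hCcl : IsClosed C :=
    ((isCompact_stdSimplex ℝ (S ⊕ T)).image L.continuous_of_finiteDimensional).isClosed
  by_cases h0 : (0 : S → ℝ) ∈ C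
  · -- 0 is a convex combination: extract τ
    obtain ⟨w, hw, hw0⟩ := h0
    have heq : ∀ s, w (Sum.inl s) + ∑ t : T, w (Sum.inr t) * W s t = 0 := by
      intro s
      have := congrFun hw0 s
      rw [hLapp] at this
      rw [Fintype.sum_sum_type] at this
      simpa [hg, Pi.single_apply] using this
    set Z : ℝ := ∑ t : T, w (Sum.inr t) with hZ
    have hZnn : 0 ≤ Z := Finset.sum_nonneg fun t _ => hw.1 _
    have hZpos : 0 < Z := by
      rcases hZnn.lt_or_eq with h | h
      · exact h
      · exfalso
        have hzero : ∀ t : T, w (Sum.inr t) = 0 := by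
          intro t
          have := (Finset.sum_eq_zero_iff_of_nonneg (fun t _ => hw.1 (Sum.inr t))).1 h.symm
          exact this t (Finset.mem_univ t)
        have hzl : ∀ s : S, w (Sum.inl s) = 0 := by
          intro s
          have := heq s
          simp [hzero] at this
          exact this
        have h1 := hw.2
        rw [Fintype.sum_sum_type] at h1
        simp [hzero, hzl] at h1
    refine Or.inl ⟨fun t => w (Sum.inr t) / Z, ⟨fun t => div_nonneg (hw.1 _) hZnn, ?_⟩, ?_⟩
    · rw [← Finset.sum_div, ← hZ, div_self hZpos.ne']
    · intro s
      rw [show ∑ t : T, w (Sum.inr t) / Z * W s t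
            = (∑ t : T, w (Sum.inr t) * W s t) / Z by
          rw [Finset.sum_div]; exact Finset.sum_congr rfl fun t _ => by ring]
      have hs := heq s
      have hwl : 0 ≤ w (Sum.inl s) := hw.1 _
      have : ∑ t : T, w (Sum.inr t) * W s t ≤ 0 := by linarith
      exact div_nonpos_of_nonpos_of_nonneg this hZnn
  · -- separate 0 from C
    obtain ⟨f, u, hfC, hu⟩ := geometric_hahn_banach_closed_point hCconv hCcl h0
    have hu0 : u < 0 := by simpa using hu
    have hgC : ∀ i : S ⊕ T, g i ∈ C := by
      intro i
      refine ⟨Pi.single i 1, single_mem_stdSimplex ℝ i, ?_⟩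
      funext s
      rw [hLapp]
      simp [Pi.single_apply]
    have hkey : ∀ x : S → ℝ, f x = ∑ s : S, x s * f (Pi.single s 1) := by
      intro x
      conv_lhs => rw [pi_eq_sum_univ x]
      rw [map_sum]
      refine Finset.sum_congr rfl fun s _ => ?_
      rw [map_smul, smul_eq_mul]
      congr 1
      congr 1
      funext j
      simp [Pi.single_apply, eq_comm]
    set σ₀ : S → ℝ := fun s => -f (Pi.single s 1) with hσ₀
    have hσ₀pos : ∀ s, 0 < σ₀ s := by
      intro s
      have h1 := hfC _ (hgC (Sum.inl s))
      simp only [hg, Sum.elim_inl] at h1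
      simp only [hσ₀]
      linarith
    have hcolpos : ∀ t : T, 0 < ∑ s : S, σ₀ s * W s t := by
      intro t
      have h1 := hfC _ (hgC (Sum.inr t))
      rw [hkey] at h1
      simp only [hg, Sum.elim_inr] at h1
      have : ∑ s : S, W s t * f (Pi.single s 1) = -∑ s : S, σ₀ s * W s t := by
        rw [← Finset.sum_neg_distrib]
        exact Finset.sum_congr rfl fun s _ => by simp [hσ₀]; ring
      rw [this] at h1
      linarith
    set Z : ℝ := ∑ s : S, σ₀ s with hZ
    have hZpos : 0 < Z := Finset.sum_pos (fun s _ => hσ₀pos s) Finset.univ_nonempty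
    refine Or.inr ⟨fun s => σ₀ s / Z, ⟨fun s => div_nonneg (hσ₀pos s).le hZpos.le, ?_⟩, ?_⟩
    · rw [← Finset.sum_div, ← hZ, div_self hZpos.ne']
    · intro t
      rw [show ∑ s : S, σ₀ s / Z * W s t = (∑ s : S, σ₀ s * W s t) / Z by
          rw [Finset.sum_div]; exact Finset.sum_congr rfl fun s _ => by ring]
      exact div_pos (hcolpos t) hZpos

lemma ciInf_neg_eq {ι : Type*} [Nonempty ι] (f : ι → ℝ) (h : BddAbove (range f)) :
    ⨅ i, -f i = -⨆ i, f i := by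
  have hb : BddBelow (range fun i => -f i) := by
    obtain ⟨u, hu⟩ := h
    exact ⟨-u, by rintro _ ⟨i, rfl⟩; simpa using neg_le_neg (hu (mem_range_self i))⟩
  apply le_antisymm
  · rw [le_neg]
    refine ciSup_le fun i => ?_
    have := ciInf_le hb i
    linarith
  · refine le_ciInf fun i => ?_
    have := le_ciSup h i
    linarith

/-- Von Neumann's minimax theorem, in the form needed here. -/
theorem maxmin_flip_neg [Nonempty S] [Nonempty T] (W : S → T → ℝ) :
    maxmin (fun t s => -W s t) = -maxmin W := by
  have hswap : ∀ (σ : stdSimplex ℝ S) (τ : stdSimplex ℝ T),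
      ∑ t : T, ∑ s : S, τ.1 t * σ.1 s * (fun t s => -W s t) t s
        = -∑ s : S, ∑ t : T, σ.1 s * τ.1 t * W s t := by
    intro σ τ
    rw [Finset.sum_comm, ← Finset.sum_neg_distrib]
    refine Finset.sum_congr rfl fun s _ => ?_
    rw [← Finset.sum_neg_distrib]
    exact Finset.sum_congr rfl fun t _ => by ring
  apply le_antisymm
  · -- weak duality
    refine ciSup_le fun τ => ?_
    have h1 : (⨅ σ : stdSimplex ℝ S,
        ∑ t : T, ∑ s : S, τ.1 t * σ.1 s * (fun t s => -W s t) t s)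
        = -⨆ σ : stdSimplex ℝ S, ∑ s : S, ∑ t : T, σ.1 s * τ.1 t * W s t := by
      rw [← ciInf_neg_eq _ (bddAbove_pay W τ)]
      exact iInf_congr fun σ => hswap σ τ
    rw [h1, neg_le_neg_iff]
    refine ciSup_le fun σ => ?_
    exact le_ciSup_of_le (bddAbove_pay W τ) σ
      (ciInf_le_of_le (bddBelow_pay W σ) τ le_rfl)
  · -- strong duality via the alternative
    by_contra hlt
    push_neg at hlt
    set v := maxmin W with hv
    set v' := maxmin (fun t s => -W s t) with hv'
    set c : ℝ := (v - v') / 2 with hc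
    have hvc : v < c := by simp only [hc]; linarith
    have hv'c : v' < -c := by simp only [hc]; linarith
    rcases matrix_alternative (fun s t => W s t - c) with ⟨τ, hτmem, hτ⟩ | ⟨σ, hσmem, hσ⟩
    · -- then v' ≥ -c, contradiction
      have hτW : ∀ s, ∑ t : T, τ t * W s t ≤ c := by
        intro s
        have h1 := hτ s
        have h2 : ∑ t : T, τ t * (W s t - c) = (∑ t : T, τ t * W s t) - c := by
          rw [show (∑ t : T, τ t * (W s t - c)) = ∑ t : T, (τ t * W s t - τ t * c) from
            Finset.sum_congr rfl fun t _ => by ring]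
          rw [Finset.sum_sub_distrib, ← Finset.sum_mul, hτmem.2, one_mul]
        linarith [h2 ▸ h1]
      have : -c ≤ v' := by
        refine le_maxmin _ (-c) ⟨τ, hτmem⟩ fun σ => ?_
        have h3 : ∑ t : T, ∑ s : S, τ t * σ.1 s * (-W s t)
            = -∑ s : S, σ.1 s * (∑ t : T, τ t * W s t) := by
          rw [Finset.sum_comm, ← Finset.sum_neg_distrib]
          refine Finset.sum_congr rfl fun s _ => ?_
          rw [Finset.mul_sum, ← Finset.sum_neg_distrib]
          exact Finset.sum_congr rfl fun t _ => by ring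
        calc -c = -∑ s : S, σ.1 s * c := by rw [← Finset.sum_mul, σ.2.2, one_mul]
          _ ≤ -∑ s : S, σ.1 s * (∑ t : T, τ t * W s t) := by
              refine neg_le_neg (Finset.sum_le_sum fun s _ => ?_)
              exact mul_le_mul_of_nonneg_left (hτW s) (σ.2.1 s)
          _ = ∑ t : T, ∑ s : S, τ t * σ.1 s * (-W s t) := h3.symm
      linarith
    · -- then v ≥ c, contradiction
      have hσW : ∀ t, c ≤ ∑ s : S, σ s * W s t := by
        intro t
        have h1 := hσ t
        have h2 : ∑ s : S, σ s * (W s t - c) = (∑ s : S, σ s * W s t) - c := by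
          rw [show (∑ s : S, σ s * (W s t - c)) = ∑ s : S, (σ s * W s t - σ s * c) from
            Finset.sum_congr rfl fun s _ => by ring]
          rw [Finset.sum_sub_distrib, ← Finset.sum_mul, hσmem.2, one_mul]
        linarith [h2 ▸ h1]
      have : c ≤ v := by
        refine le_maxmin _ c ⟨σ, hσmem⟩ fun τ => ?_
        have h3 : ∑ s : S, ∑ t : T, σ s * τ.1 t * W s t
            = ∑ t : T, τ.1 t * (∑ s : S, σ s * W s t) := by
          rw [Finset.sum_comm]
          refine Finset.sum_congr rfl fun t _ => ?_
          rw [Finset.mul_sum]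
          exact Finset.sum_congr rfl fun s _ => by ring
        calc c = ∑ t : T, τ.1 t * c := by rw [← Finset.sum_mul, τ.2.2, one_mul]
          _ ≤ ∑ t : T, τ.1 t * (∑ s : S, σ s * W s t) :=
              Finset.sum_le_sum fun t _ =>
                mul_le_mul_of_nonneg_left (hσW t) (τ.2.1 t)
          _ = ∑ s : S, ∑ t : T, σ s * τ.1 t * W s t := h3.symm
      linarith

end MinimaxHelpers

/-- In a finite two-player stochastic game, the difference of the components of the HS
Bellman update equals the zero-sum Bellman update (coalition reward `R₁ − R₂`,
maximizing player 1) of the component difference. -/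
theorem hs_bellman_diff {X A₁ A₂ : Type*} [Fintype X] [Fintype A₁] [Fintype A₂]
    [Nonempty X] [Nonempty A₁] [Nonempty A₂]
    (P : X → A₁ × A₂ → X → ℝ)
    (hP_nonneg : ∀ x a y, 0 ≤ P x a y) (hP_sum : ∀ x a, ∑ y : X, P x a y = 1)
    (γ : ℝ) (hγ0 : 0 ≤ γ) (hγ1 : γ < 1)
    (R₁ R₂ : X → A₁ × A₂ → X → ℝ) (V : X → ℝ × ℝ) (x : X) :
    (bellmanHS P γ R₁ R₂ V x).1 - (bellmanHS P γ R₁ R₂ V x).2 =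
      bellmanZS1 P γ (fun x a y => R₁ x a y - R₂ x a y)
        (fun y => (V y).1 - (V y).2) x := by
  simp only [bellmanHS, bellmanZS1, hs1, hs2]
  set U₁ : A₁ → A₂ → ℝ := fun a₁ a₂ => ∑ y : X, P x (a₁, a₂) y * (R₁ x (a₁, a₂) y + γ * (V y).1) with hU₁
  set U₂ : A₁ → A₂ → ℝ := fun a₁ a₂ => ∑ y : X, P x (a₁, a₂) y * (R₂ x (a₁, a₂) y + γ * (V y).2) with hU₂
  set W : A₁ → A₂ → ℝ := fun a₁ a₂ => U₁ a₁ a₂ - U₂ a₁ a₂ with hW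
  have hW3 : (fun a₁ a₂ => ∑ y : X, P x (a₁, a₂) y *
      ((fun x a y => R₁ x a y - R₂ x a y) x (a₁, a₂) y
        + γ * ((fun y => (V y).1 - (V y).2) y))) = W := by
    funext a₁ a₂
    simp only [hW, hU₁, hU₂, ← Finset.sum_sub_distrib]
    exact Finset.sum_congr rfl fun y _ => by ring
  have hW2 : (fun a₂ a₁ => U₂ a₁ a₂ - U₁ a₁ a₂) = fun a₂ a₁ => -W a₁ a₂ := by
    funext a₂ a₁; simp [hW]
  rw [hW3, hW2, maxmin_flip_neg W]
  ring
end

section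
/- Let n ≥ 1 and N = {1,…,n}, let X be a nonempty finite set, and for each nonempty I ⊆ N let V_I : X → ℝ be a function satisfying V_{N∖I} = −V_I for every I with ∅ ≠ I ⊊ N. Define V_{HS,i}(x) = (1/n) Σ_{I ⊆ N, i ∈ I} C(n−1, |I|−1)⁻¹ V_I(x). Then for every x ∈ X, Σ_{i ∈ N} V_{HS,i}(x) = V_N(x); that is, the stochastic-game HS values of the players sum to the grand-coalition value function. -/
open Finset

/-- If the coalition value functions `V_I : X → ℝ` satisfy `V_{N∖I} = −V_I` for every
nonempty proper coalition `I`, then the stochastic-game HS values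
`V_{HS,i}(x) = (1/n) Σ_{I ∋ i} C(n−1,|I|−1)⁻¹ V_I(x)` sum (over players) to the
grand-coalition value function `V_N`. -/
theorem stochastic_hs_values_sum_to_grand_coalition (n : ℕ) (hn : 1 ≤ n)
    (X : Type*) [Fintype X] [Nonempty X]
    (V : Finset (Fin n) → X → ℝ)
    (hV : ∀ I : Finset (Fin n), I ≠ ∅ → I ⊂ Finset.univ → V Iᶜ = -V I)
    (x : X) :
    ∑ i : Fin n,
        (1 / (n : ℝ)) *
          ∑ I ∈ Finset.univ.filter (fun I : Finset (Fin n) => i ∈ I),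
            ((Nat.choose (n - 1) (I.card - 1) : ℝ))⁻¹ * V I x =
      V Finset.univ x := by
  classical
  have hnpos : 0 < n := hn
  have hn0 : (n : ℝ) ≠ 0 := Nat.cast_ne_zero.mpr hnpos.ne'
  set F : Finset (Fin n) → ℝ := fun I =>
    (I.card : ℝ) * (((Nat.choose (n - 1) (I.card - 1) : ℝ))⁻¹ * V I x) with hF
  -- Step 1: swap the order of summation
  have step1 : ∑ i : Fin n,
        (1 / (n : ℝ)) *
          ∑ I ∈ Finset.univ.filter (fun I : Finset (Fin n) => i ∈ I),
            ((Nat.choose (n - 1) (I.card - 1) : ℝ))⁻¹ * V I x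
      = (1 / (n : ℝ)) * ∑ I : Finset (Fin n), F I := by
    rw [← Finset.mul_sum]
    congr 1
    calc ∑ i : Fin n, ∑ I ∈ Finset.univ.filter (fun I : Finset (Fin n) => i ∈ I),
            ((Nat.choose (n - 1) (I.card - 1) : ℝ))⁻¹ * V I x
        = ∑ i : Fin n, ∑ I : Finset (Fin n),
            if i ∈ I then ((Nat.choose (n - 1) (I.card - 1) : ℝ))⁻¹ * V I x else 0 := by
          simp [Finset.sum_filter]
      _ = ∑ I : Finset (Fin n), ∑ i : Fin n,
            if i ∈ I then ((Nat.choose (n - 1) (I.card - 1) : ℝ))⁻¹ * V I x else 0 :=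
          Finset.sum_comm
      _ = ∑ I : Finset (Fin n), F I := by
          refine Finset.sum_congr rfl fun I _ => ?_
          rw [Finset.sum_ite_mem, Finset.univ_inter, Finset.sum_const, nsmul_eq_mul]
  rw [step1]
  -- the sum over nonempty proper coalitions cancels
  have hcancel : ∑ I ∈ Finset.univ.filter
      (fun I : Finset (Fin n) => I ≠ ∅ ∧ I ≠ Finset.univ), F I = 0 := by
    refine Finset.sum_involution (fun I _ => Iᶜ) ?_ ?_ ?_ ?_
    · -- F I + F Iᶜ = 0
      intro I hI
      simp only [Finset.mem_filter, Finset.mem_univ, true_and] at hI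
      obtain ⟨hne, hneu⟩ := hI
      have hsub : I ⊂ Finset.univ := Finset.ssubset_univ_iff.mpr hneu
      have hVc : V Iᶜ x = - V I x := by rw [hV I hne hsub]; rfl
      have hcardc : Iᶜ.card = n - I.card := by
        rw [Finset.card_compl, Fintype.card_fin]
      have hc1 : 1 ≤ I.card := Finset.card_pos.mpr (Finset.nonempty_iff_ne_empty.mpr hne)
      have hclt : I.card < n := by
        have := Finset.card_lt_card hsub
        simpa [Finset.card_univ] using this
      have hc2 : I.card ≤ n - 1 := Nat.le_sub_one_of_lt hclt
      -- key nat identity : C(n-1,c) * c = C(n-1,c-1) * (n-c)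
      have hkey : (n - 1).choose I.card * I.card
          = (n - 1).choose (I.card - 1) * (n - I.card) := by
        have h := Nat.choose_succ_right_eq (n - 1) (I.card - 1)
        have h1 : I.card - 1 + 1 = I.card := by omega
        have h2 : n - 1 - (I.card - 1) = n - I.card := by omega
        rwa [h1, h2] at h
      have hsymm : (n - 1).choose (n - I.card - 1) = (n - 1).choose I.card := by
        have h3 : n - I.card - 1 = n - 1 - I.card := by omega
        rw [h3, Nat.choose_symm hc2]
      have hA : ((n - 1).choose (I.card - 1) : ℝ) ≠ 0 :=
        Nat.cast_ne_zero.mpr (Nat.choose_pos (by omega)).ne'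
      have hB : ((n - 1).choose I.card : ℝ) ≠ 0 :=
        Nat.cast_ne_zero.mpr (Nat.choose_pos hc2).ne'
      have hw : (I.card : ℝ) * (((n - 1).choose (I.card - 1) : ℝ))⁻¹
          = ((n - I.card : ℕ) : ℝ) * (((n - 1).choose (n - I.card - 1) : ℝ))⁻¹ := by
        rw [hsymm, inv_eq_one_div, inv_eq_one_div, mul_one_div, mul_one_div,
          div_eq_div_iff hA hB]
        have hkey' : I.card * (n - 1).choose I.card
            = (n - I.card) * (n - 1).choose (I.card - 1) := by
          rw [Nat.mul_comm, hkey, Nat.mul_comm]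
        exact_mod_cast hkey'
      simp only [hF, hcardc, hVc]
      linear_combination (V I x) * hw
    · -- Iᶜ ≠ I
      intro I _ _ h
      replace h : Iᶜ = I := h
      have h0 := Finset.mem_compl (a := (⟨0, hnpos⟩ : Fin n)) (s := I)
      rw [h] at h0
      tauto
    · -- Iᶜ ∈ filter
      intro I hI
      simp only [Finset.mem_filter, Finset.mem_univ, true_and] at hI ⊢
      constructor
      · simpa using hI.2
      · simpa using hI.1
    · intro I hI
      exact compl_compl I
  have hsplit := Finset.sum_filter_add_sum_filter_not Finset.univ
    (fun I : Finset (Fin n) => I ≠ ∅ ∧ I ≠ Finset.univ) F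
  have hempty_ne : (∅ : Finset (Fin n)) ≠ Finset.univ := by
    intro h
    have : (⟨0, hnpos⟩ : Fin n) ∈ (∅ : Finset (Fin n)) := h ▸ Finset.mem_univ _
    simp at this
  have hset : Finset.univ.filter
      (fun I : Finset (Fin n) => ¬ (I ≠ ∅ ∧ I ≠ Finset.univ))
      = {∅, Finset.univ} := by
    ext I
    simp only [Finset.mem_filter, Finset.mem_univ, true_and, not_and_or, not_not,
      Finset.mem_insert, Finset.mem_singleton]
  have hrest : ∑ I ∈ Finset.univ.filter
      (fun I : Finset (Fin n) => ¬ (I ≠ ∅ ∧ I ≠ Finset.univ)), F I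
      = F ∅ + F Finset.univ := by
    rw [hset, Finset.sum_pair hempty_ne]
  have hFe : F ∅ = 0 := by simp [hF]
  have hFu : F Finset.univ = (n : ℝ) * V Finset.univ x := by
    simp [hF, Finset.card_univ, Nat.choose_self]
  have : ∑ I : Finset (Fin n), F I = (n : ℝ) * V Finset.univ x := by
    rw [← hsplit, hcancel, hrest, hFe, hFu]; ring
  rw [this]
  field_simp
end
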